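/- Fix k ∈ ℤ₊ and let V be any linear subspace of the dual of Π(ℝ^d) such that every nonzero λ ∈ V vanishes on Π_{<k} but does not vanish on Π_{≤k}. Then the bilinear form ⟨λ,μ⟩_k := (−1)^k (λ⊗μ)‖x−y‖^(2k) is an inner product on V (i.e., it is symmetric and positive definite on V). -/

import Mathlib

/-!
Write `‖x - y‖² = ‖x‖² + ‖y‖² - 2⟨x, y⟩` and expand its `k`-th power by the binomial and
multinomial theorems: `(λ ⊗ μ)‖x - y‖^(2k)` becomes a sum of terms
`c · λ(p_{i,β}) μ(p_{j,β})` with `i + j + |β| = k`, where `c` carries the sign `(-2)^|β|`.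
If `λ` and `μ` vanish on `Π_{<k}`, a term can survive only when `2i + |β| ≥ k` and
`2j + |β| ≥ k`, i.e. `i = j`; then `(-1)^k c ≥ 0`, so `⟨λ, λ⟩ₖ` is a sum of nonnegative
multiples of squares. Among them are `2^k · multinomial(β) · λ(x^β)²` for `|β| = k`, and some
`λ(x^β)` with `|β| = k` is nonzero because `λ` vanishes on `Π_{<k}` but not on `Π_{≤k}`.
Symmetry comes from the invariance of `‖x - y‖^(2k)` under `x ↔ y`.
-/

open MvPolynomial Finset

noncomputable section

/-- The multi-index on the first (`x`) block of variables of a monomial in `Fin d ⊕ Fin d`. -/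
def xpart {d : ℕ} (m : (Fin d ⊕ Fin d) →₀ ℕ) : Fin d →₀ ℕ :=
  Finsupp.equivFunOnFinite.symm fun i => m (Sum.inl i)

/-- The multi-index on the second (`y`) block of variables. -/
def ypart {d : ℕ} (m : (Fin d ⊕ Fin d) →₀ ℕ) : Fin d →₀ ℕ :=
  Finsupp.equivFunOnFinite.symm fun i => m (Sum.inr i)

/-- `(l ⊗ m) f`: apply `l` in the `x`-variables and `m` in the `y`-variables of a
two-block polynomial `f`, via its canonical representation as a sum of products
of monomials in `x` and monomials in `y`. -/
def tensorApply {d : ℕ} (l m : Module.Dual ℝ (MvPolynomial (Fin d) ℝ))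
    (f : MvPolynomial (Fin d ⊕ Fin d) ℝ) : ℝ :=
  ∑ mo ∈ f.support, f.coeff mo * l (monomial (xpart mo) 1) * m (monomial (ypart mo) 1)

/-- Apply the linear functional `l` in the second (`y`) block of variables,
yielding a polynomial in the first (`x`) block of variables. -/
def applySecond {d : ℕ} (l : Module.Dual ℝ (MvPolynomial (Fin d) ℝ))
    (f : MvPolynomial (Fin d ⊕ Fin d) ℝ) : MvPolynomial (Fin d) ℝ :=
  ∑ mo ∈ f.support, monomial (xpart mo) (f.coeff mo * l (monomial (ypart mo) 1))

/-- The polynomial `(x,y) ↦ ‖x-y‖^(2k)` in the `2d` variables `x(1),…,x(d),y(1),…,y(d)`. -/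
def distPoly (d k : ℕ) : MvPolynomial (Fin d ⊕ Fin d) ℝ :=
  (∑ i : Fin d, (X (Sum.inl i) - X (Sum.inr i)) ^ 2) ^ k

/-- `l` vanishes on all polynomials of total degree `< k` (i.e. `l ⊥ Π_{<k}`). -/
def VanishesLT {d : ℕ} (l : Module.Dual ℝ (MvPolynomial (Fin d) ℝ)) (k : ℕ) : Prop :=
  ∀ p : MvPolynomial (Fin d) ℝ, p.totalDegree < k → l p = 0

/-- `l` vanishes on all polynomials of total degree `≤ k` (i.e. `l ⊥ Π_{≤k}`). -/
def VanishesLE {d : ℕ} (l : Module.Dual ℝ (MvPolynomial (Fin d) ℝ)) (k : ℕ) : Prop :=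
  ∀ p : MvPolynomial (Fin d) ℝ, p.totalDegree ≤ k → l p = 0

/-- `p_{a,β} : x ↦ ‖x‖^(2a) x^β` as a polynomial. -/
def pPoly (d : ℕ) (a : ℕ) (β : Fin d →₀ ℕ) : MvPolynomial (Fin d) ℝ :=
  (∑ i : Fin d, X i ^ 2) ^ a * monomial β 1

section

variable {R σ : Type*}

lemma map_monomial_eq_smul [CommSemiring R] {M : Type*} [AddCommMonoid M] [Module R M]
    (f : MvPolynomial σ R →ₗ[R] M) (s : σ →₀ ℕ) (a : R) :
    f (monomial s a) = a • f (monomial s 1) := by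
  rw [← map_smul, smul_monomial, smul_eq_mul, mul_one]

lemma monomial_one_eq_prod_X_pow [CommSemiring R] [Fintype σ] (s : σ →₀ ℕ) :
    (monomial s 1 : MvPolynomial σ R) = ∏ i, X i ^ s i := by
  rw [monomial_eq, C_1, one_mul, Finsupp.prod_fintype _ _ fun _ => pow_zero _]

lemma sum_sq_sub_eq [CommRing R] [Fintype σ] :
    (∑ i : σ, (X (Sum.inl i) - X (Sum.inr i)) ^ 2 : MvPolynomial (σ ⊕ σ) R) =
      -2 * ∑ i, X (Sum.inl i) * X (Sum.inr i) +
        (rename Sum.inl (∑ i, X i ^ 2) + rename Sum.inr (∑ i, X i ^ 2)) := by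
  simp only [map_sum, map_pow, rename_X, mul_sum, ← sum_add_distrib]
  exact sum_congr rfl fun i _ => by ring

lemma sum_mul_pow_eq [CommSemiring R] [Fintype σ] [DecidableEq σ] (b : ℕ) :
    (∑ i : σ, X (Sum.inl i) * X (Sum.inr i) : MvPolynomial (σ ⊕ σ) R) ^ b =
      ∑ β ∈ univ.finsuppAntidiag b, (Nat.multinomial univ β : MvPolynomial _ R) *
        (rename Sum.inl (monomial β 1) * rename Sum.inr (monomial β 1)) := by
  rw [sum_pow_eq_sum_piAntidiag]
  refine sum_equiv Finsupp.equivFunOnFinite.symm (by simp) fun α _ => ?_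
  simp only [monomial_one_eq_prod_X_pow, map_prod, map_pow, rename_X, ← prod_mul_distrib,
    mul_pow, Finsupp.equivFunOnFinite_symm_apply_apply, Finsupp.coe_equivFunOnFinite_symm]

lemma neg_one_pow_mul_neg_two_pow_of_add_two_mul [CommRing R] {b i k : ℕ} (h : b + 2 * i = k) :
    (-1 : R) ^ k * (-2) ^ b = 2 ^ b := by
  rw [← h, pow_add, pow_mul, neg_one_sq, one_pow, mul_one, ← mul_pow, neg_one_mul, neg_neg]

end

section

variable {d : ℕ} (l m : Module.Dual ℝ (MvPolynomial (Fin d) ℝ))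

def tensorApplyₗ : MvPolynomial (Fin d ⊕ Fin d) ℝ →ₗ[ℝ] ℝ :=
  (basisMonomials _ ℝ).constr ℝ fun mo => l (monomial (xpart mo) 1) * m (monomial (ypart mo) 1)

@[simp]
lemma tensorApplyₗ_apply (f : MvPolynomial (Fin d ⊕ Fin d) ℝ) :
    tensorApplyₗ l m f = tensorApply l m f := by
  simp only [tensorApplyₗ, Module.Basis.constr_apply, tensorApply, smul_eq_mul, mul_assoc]
  -- the coordinates in `basisMonomials` are the coefficients, definitionally
  rfl

lemma tensorApply_monomial (mo : (Fin d ⊕ Fin d) →₀ ℕ) (c : ℝ) :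
    tensorApply l m (monomial mo c) =
      c * (l (monomial (xpart mo) 1) * m (monomial (ypart mo) 1)) := by
  rw [← tensorApplyₗ_apply, map_monomial_eq_smul, smul_eq_mul]
  exact congrArg (c * ·) ((basisMonomials _ ℝ).constr_basis ℝ _ mo)

lemma xpart_mapDomain_inl_add_mapDomain_inr (α β : Fin d →₀ ℕ) :
    xpart (α.mapDomain Sum.inl + β.mapDomain Sum.inr) = α := by
  ext i
  simp [xpart, Finsupp.mapDomain_apply Sum.inl_injective,
    Finsupp.mapDomain_of_notMem_range _ _ (by simp : Sum.inl i ∉ Set.range Sum.inr)]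

lemma ypart_mapDomain_inl_add_mapDomain_inr (α β : Fin d →₀ ℕ) :
    ypart (α.mapDomain Sum.inl + β.mapDomain Sum.inr) = β := by
  ext i
  simp [ypart, Finsupp.mapDomain_apply Sum.inr_injective,
    Finsupp.mapDomain_of_notMem_range _ _ (by simp : Sum.inr i ∉ Set.range Sum.inl)]

lemma xpart_mapDomain_swap (mo : (Fin d ⊕ Fin d) →₀ ℕ) :
    xpart (mo.mapDomain Sum.swap) = ypart mo := by
  ext i
  exact Finsupp.mapDomain_apply Sum.swap_leftInverse.injective mo (Sum.inr i)

lemma ypart_mapDomain_swap (mo : (Fin d ⊕ Fin d) →₀ ℕ) :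
    ypart (mo.mapDomain Sum.swap) = xpart mo := by
  ext i
  exact Finsupp.mapDomain_apply Sum.swap_leftInverse.injective mo (Sum.inl i)

lemma tensorApply_rename_swap (f : MvPolynomial (Fin d ⊕ Fin d) ℝ) :
    tensorApply l m (rename Sum.swap f) = tensorApply m l f := by
  induction f using MvPolynomial.induction_on' with
  | monomial mo c =>
    rw [rename_monomial, tensorApply_monomial, tensorApply_monomial, xpart_mapDomain_swap,
      ypart_mapDomain_swap, mul_comm (l _)]
  | add f g hf hg => simp only [map_add, ← tensorApplyₗ_apply] at *; rw [hf, hg]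

lemma tensorApply_rename_inl_mul_rename_inr (f g : MvPolynomial (Fin d) ℝ) :
    tensorApply l m (rename Sum.inl f * rename Sum.inr g) = l f * m g := by
  induction f using MvPolynomial.induction_on' with
  | monomial α a =>
    induction g using MvPolynomial.induction_on' with
    | monomial β b =>
      rw [rename_monomial, rename_monomial, monomial_mul, tensorApply_monomial,
        xpart_mapDomain_inl_add_mapDomain_inr, ypart_mapDomain_inl_add_mapDomain_inr,
        map_monomial_eq_smul l α a, map_monomial_eq_smul m β b, smul_eq_mul, smul_eq_mul]
      ring
    | add g g' hg hg' => simp only [map_add, mul_add, ← tensorApplyₗ_apply] at *; rw [hg, hg']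
  | add f f' hf hf' => simp only [map_add, add_mul, ← tensorApplyₗ_apply] at *; rw [hf, hf']

lemma rename_swap_distPoly (k : ℕ) : rename Sum.swap (distPoly d k) = distPoly d k := by
  simp only [distPoly, map_pow, map_sum, map_sub, rename_X, Sum.swap_inl, Sum.swap_inr]
  congr 1
  exact sum_congr rfl fun i _ => by ring

lemma tensorApply_distPoly_comm (k : ℕ) :
    tensorApply l m (distPoly d k) = tensorApply m l (distPoly d k) := by
  rw [← tensorApply_rename_swap, rename_swap_distPoly]

lemma distPoly_eq_sum (k : ℕ) :
    distPoly d k = ∑ p ∈ antidiagonal k, ∑ q ∈ antidiagonal p.2, ∑ β ∈ univ.finsuppAntidiag p.1,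
      ((-2) ^ p.1 * (k.choose p.1 * p.2.choose q.1 * Nat.multinomial univ β) : ℝ) •
        (rename Sum.inl (pPoly d q.1 β) * rename Sum.inr (pPoly d q.2 β)) := by
  rw [distPoly, sum_sq_sub_eq, (Commute.all _ _).add_pow']
  refine sum_congr rfl fun p _ => ?_
  rw [mul_pow, sum_mul_pow_eq, (Commute.all _ _).add_pow', mul_sum, smul_sum]
  refine sum_congr rfl fun q _ => ?_
  rw [mul_sum, sum_mul, smul_sum]
  refine sum_congr rfl fun β _ => ?_
  simp only [pPoly, smul_eq_C_mul, nsmul_eq_mul, map_mul, map_pow, map_sum, rename_X, C_neg,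
    map_ofNat, map_natCast]
  ring

lemma tensorApply_distPoly (k : ℕ) :
    tensorApply l m (distPoly d k) =
      ∑ p ∈ antidiagonal k, ∑ q ∈ antidiagonal p.2, ∑ β ∈ univ.finsuppAntidiag p.1,
        (-2) ^ p.1 * (k.choose p.1 * p.2.choose q.1 * Nat.multinomial univ β) *
          (l (pPoly d q.1 β) * m (pPoly d q.2 β)) := by
  simp only [distPoly_eq_sum, ← tensorApplyₗ_apply, map_sum, map_smul, smul_eq_mul]
  simp only [tensorApplyₗ_apply, tensorApply_rename_inl_mul_rename_inr]

lemma totalDegree_pPoly_le (a : ℕ) (β : Fin d →₀ ℕ) :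
    (pPoly d a β).totalDegree ≤ 2 * a + ∑ i, β i := by
  have hQ : (∑ i : Fin d, X i ^ 2 : MvPolynomial (Fin d) ℝ).totalDegree ≤ 2 :=
    (totalDegree_finsetSum _ _).trans <| Finset.sup_le fun i _ => (totalDegree_X_pow i 2).le
  have hβ : (monomial β (1 : ℝ)).totalDegree ≤ ∑ i, β i :=
    (totalDegree_monomial_le β 1).trans_eq (Finsupp.sum_fintype _ _ fun _ => rfl)
  calc (pPoly d a β).totalDegree
      ≤ a * 2 + ∑ i, β i := (totalDegree_mul _ _).trans <|
        add_le_add ((totalDegree_pow _ a).trans (Nat.mul_le_mul_left a hQ)) hβ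
    _ = 2 * a + ∑ i, β i := by ring

lemma exists_apply_monomial_ne_zero {k : ℕ} (hlt : VanishesLT l k) (hle : ¬ VanishesLE l k) :
    ∃ β : Fin d →₀ ℕ, ∑ i, β i = k ∧ l (monomial β 1) ≠ 0 := by
  obtain ⟨p, hpk, hlp⟩ : ∃ p, p.totalDegree ≤ k ∧ l p ≠ 0 := by
    simpa [VanishesLE] using hle
  have hsum : l p = ∑ β ∈ p.support, coeff β p * l (monomial β 1) := by
    conv_lhs => rw [p.as_sum]
    exact (map_sum l _ _).trans (sum_congr rfl fun β _ => map_monomial_eq_smul l β _)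
  obtain ⟨β, hβ, hβl⟩ := exists_ne_zero_of_sum_ne_zero (hsum ▸ hlp)
  have hlβ : l (monomial β 1) ≠ 0 := right_ne_zero_of_mul hβl
  have hdeg : (β.sum fun _ e => e) = ∑ i, β i := Finsupp.sum_fintype _ _ fun _ => rfl
  refine ⟨β, le_antisymm (hdeg ▸ (le_totalDegree hβ).trans hpk) ?_, hlβ⟩
  refine not_lt.mp fun h => hlβ (hlt _ ?_)
  rwa [totalDegree_monomial β one_ne_zero, hdeg]

lemma neg_one_pow_mul_summand_nonneg {k b i j : ℕ} (hk : b + (i + j) = k)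
    (hlt : VanishesLT l k) {β : Fin d →₀ ℕ} (hβ : ∑ t, β t = b) {c : ℝ} (hc : 0 ≤ c) :
    0 ≤ (-1) ^ k * ((-2) ^ b * c * (l (pPoly d i β) * l (pPoly d j β))) := by
  rcases eq_or_ne i j with rfl | hij
  · have hsign := neg_one_pow_mul_neg_two_pow_of_add_two_mul (R := ℝ) (show b + 2 * i = k by omega)
    calc (0 : ℝ) ≤ 2 ^ b * c * (l (pPoly d i β) * l (pPoly d i β)) :=
          mul_nonneg (mul_nonneg (by positivity) hc) (mul_self_nonneg _)
      _ = _ := by rw [← hsign]; ring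
  · have hzero : l (pPoly d i β) = 0 ∨ l (pPoly d j β) = 0 := by
      rcases lt_or_gt_of_ne hij with h | h
      · exact .inl (hlt _ ((totalDegree_pPoly_le i β).trans_lt (by omega)))
      · exact .inr (hlt _ ((totalDegree_pPoly_le j β).trans_lt (by omega)))
    rcases hzero with h | h <;> simp [h]

theorem neg_one_pow_mul_tensorApply_distPoly_self_pos {k : ℕ} (hlt : VanishesLT l k)
    (hle : ¬ VanishesLE l k) : 0 < (-1) ^ k * tensorApply l l (distPoly d k) := by
  obtain ⟨β₀, hβ₀k, hβ₀⟩ := exists_apply_monomial_ne_zero l hlt hle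
  have hterm : ∀ p ∈ antidiagonal k, ∀ q ∈ antidiagonal p.2, ∀ β ∈ univ.finsuppAntidiag p.1,
      0 ≤ (-1) ^ k * ((-2) ^ p.1 *
        (k.choose p.1 * p.2.choose q.1 * Nat.multinomial univ β : ℝ) *
          (l (pPoly d q.1 β) * l (pPoly d q.2 β))) := by
    intro p hp q hq β hβ
    rw [HasAntidiagonal.mem_antidiagonal] at hp hq
    rw [mem_finsuppAntidiag] at hβ
    exact neg_one_pow_mul_summand_nonneg l (by omega) hlt hβ.1 (by positivity)
  rw [tensorApply_distPoly, mul_sum]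
  refine sum_pos' (fun p hp => ?_) ⟨(k, 0), by simp, ?_⟩
  · rw [mul_sum]
    refine sum_nonneg fun q hq => ?_
    rw [mul_sum]
    exact sum_nonneg (hterm p hp q hq)
  · rw [Nat.antidiagonal_zero, sum_singleton, mul_sum]
    refine sum_pos' (hterm _ (by simp) _ (by simp)) ⟨β₀, by simp [hβ₀k], ?_⟩
    have hsign :=
      neg_one_pow_mul_neg_two_pow_of_add_two_mul (R := ℝ) (show k + 2 * 0 = k by rfl)
    have hM : (0 : ℝ) < Nat.multinomial univ β₀ := by exact_mod_cast Nat.multinomial_pos _ _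
    have hsq := mul_self_pos.mpr hβ₀
    simp only [pPoly, pow_zero, one_mul, Nat.choose_self, Nat.cast_one]
    calc (0 : ℝ) < 2 ^ k * Nat.multinomial univ β₀ * (l (monomial β₀ 1) * l (monomial β₀ 1)) :=
          by positivity
      _ = _ := by rw [← hsign]; ring

end

end

/-- On any subspace `V` of the dual of `Π` all of whose nonzero elements vanish on `Π_{<k}`
but not on `Π_{≤k}`, the bilinear form `⟨λ,μ⟩ₖ := (−1)^k (λ⊗μ)‖x−y‖^(2k)` is an inner
product: it is symmetric and positive definite on `V`. -/
theorem inner_product_on_complement (d k : ℕ)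
    (V : Submodule ℝ (Module.Dual ℝ (MvPolynomial (Fin d) ℝ)))
    (hV : ∀ l ∈ V, l ≠ 0 → VanishesLT l k ∧ ¬ VanishesLE l k) :
    (∀ l ∈ V, ∀ m ∈ V,
        (-1 : ℝ) ^ k * tensorApply l m (distPoly d k) =
          (-1 : ℝ) ^ k * tensorApply m l (distPoly d k)) ∧
      (∀ l ∈ V, l ≠ 0 → 0 < (-1 : ℝ) ^ k * tensorApply l l (distPoly d k)) := by
  refine ⟨fun l _ m _ => by rw [tensorApply_distPoly_comm], fun l hl hne => ?_⟩
  obtain ⟨hlt, hle⟩ := hV l hl hne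
  exact neg_one_pow_mul_tensorApply_distPoly_self_pos l hlt hle
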